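/- Non-uniqueness of self-consistent velocities in dimension three: let p₁ = (1,0,1), p₂ = (1,0,−1), p₃ = (−1,1,0), p₄ = (−1,−1,0) in ℝ³, let H_i = ‖p_i‖²/2 = 1 for i = 1,…,4, and let v₁ = (−1/2, 0, 2), v₂ = (−1/2, 0, −2), v₃ = (1/2, 2, 0), v₄ = (1/2, −2, 0). For v ∈ ℝ³ set I(v) = {j : −H_j + ⟨p_j, v⟩ = min_{1≤i≤4}(−H_i + ⟨p_i, v⟩)}, and call v self-consistent if v ∈ convexHull{v_j : j ∈ I(v)}. Then the three pairwise distinct vectors v' = (−1/2, 0, 0), v'' = (1/2, 0, 0), and v''' = (0,0,0) are all self-consistent. -/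

import Mathlib

open scoped InnerProductSpace

noncomputable section

/-- The four momenta `p₁ = (1,0,1)`, `p₂ = (1,0,−1)`, `p₃ = (−1,1,0)`, `p₄ = (−1,−1,0)`. -/
def pEx : Fin 4 → EuclideanSpace ℝ (Fin 3) := fun i =>
  (WithLp.equiv 2 (Fin 3 → ℝ)).symm
    (![![1, 0, 1], ![1, 0, -1], ![-1, 1, 0], ![-1, -1, 0]] i)

/-- The values `H_i = ‖p_i‖²/2`. -/
def HEx : Fin 4 → ℝ := fun i => ‖pEx i‖ ^ 2 / 2

/-- The four velocities `v₁ = (−1/2,0,2)`, `v₂ = (−1/2,0,−2)`, `v₃ = (1/2,2,0)`,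
`v₄ = (1/2,−2,0)`. -/
def vEx : Fin 4 → EuclideanSpace ℝ (Fin 3) := fun i =>
  (WithLp.equiv 2 (Fin 3 → ℝ)).symm
    (![![-1/2, 0, 2], ![-1/2, 0, -2], ![1/2, 2, 0], ![1/2, -2, 0]] i)

/-- `v` is self-consistent if it lies in the convex hull of the velocities `v_j` over the
active indices `j ∈ I(v)`. -/
def SelfConsistent (v : EuclideanSpace ℝ (Fin 3)) : Prop :=
  v ∈ convexHull ℝ (vEx '' {j | -HEx j + ⟪pEx j, v⟫_ℝ
    = Finset.univ.inf' Finset.univ_nonempty fun i => -HEx i + ⟪pEx i, v⟫_ℝ})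


/-!
All `H_i` equal `1`, so at `v = (x, y, z)` the four costs `-H_j + ⟪p_j, v⟫` are
`x + z - 1, x - z - 1, -x + y - 1, -x - y - 1`. At `v'` exactly the first two are minimal and
`v'` is the midpoint of `v₁, v₂`; at `v''` exactly the last two are minimal and `v''` is the
midpoint of `v₃, v₄`; at `0` all four are minimal and `0` is the midpoint of `v'` and `v''`.
-/

theorem Finset.setOf_eq_inf'_eq {ι α : Type*} [Fintype ι] [Nonempty ι] [LinearOrder α]
    (f : ι → α) {S : Set ι} {c : α} (hS : S.Nonempty) (hmin : ∀ j ∈ S, f j = c)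
    (hgt : ∀ j ∉ S, c < f j) : {j | f j = Finset.univ.inf' Finset.univ_nonempty f} = S := by
  obtain ⟨j₀, hj₀⟩ := hS
  have hc : Finset.univ.inf' Finset.univ_nonempty f = c := by
    refine le_antisymm (hmin j₀ hj₀ ▸ Finset.inf'_le _ (Finset.mem_univ j₀)) ?_
    refine Finset.le_inf' _ _ fun j _ => ?_
    by_cases hj : j ∈ S
    · exact (hmin j hj).ge
    · exact (hgt j hj).le
  ext j
  rw [Set.mem_ofPred_eq, hc]
  by_cases hj : j ∈ S
  · simp [hj, hmin j hj]
  · simp [hj, (hgt j hj).ne']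

theorem midpoint_mem_convexHull_pair {𝕜 E : Type*} [Field 𝕜] [LinearOrder 𝕜]
    [IsStrictOrderedRing 𝕜] [AddCommGroup E] [Module 𝕜 E] (x y : E) :
    midpoint 𝕜 x y ∈ convexHull 𝕜 {x, y} := by
  rw [convexHull_pair]
  exact midpoint_mem_segment x y

lemma HEx_eq_one (i : Fin 4) : HEx i = 1 := by
  fin_cases i <;> norm_num [HEx, pEx, EuclideanSpace.norm_sq_eq, Fin.sum_univ_three,
    Matrix.cons_val_two, Matrix.vecHead, Matrix.vecTail]

lemma neg_HEx_add_inner_pEx (i : Fin 4) (x y z : ℝ) :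
    -HEx i + ⟪pEx i, (WithLp.equiv 2 (Fin 3 → ℝ)).symm ![x, y, z]⟫_ℝ
      = ![x + z - 1, x - z - 1, -x + y - 1, -x - y - 1] i := by
  rw [HEx_eq_one]
  fin_cases i <;> simp [pEx, PiLp.inner_apply, Fin.sum_univ_three] <;> ring

lemma selfConsistent_of_active {v : EuclideanSpace ℝ (Fin 3)} (S : Set (Fin 4)) (c : ℝ)
    (hS : S.Nonempty) (hmin : ∀ j ∈ S, -HEx j + ⟪pEx j, v⟫_ℝ = c)
    (hgt : ∀ j ∉ S, c < -HEx j + ⟪pEx j, v⟫_ℝ) (hv : v ∈ convexHull ℝ (vEx '' S)) :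
    SelfConsistent v := by
  rwa [SelfConsistent, Finset.setOf_eq_inf'_eq _ hS hmin hgt]

lemma midpoint_vEx_zero_one :
    midpoint ℝ (vEx 0) (vEx 1) = (WithLp.equiv 2 (Fin 3 → ℝ)).symm ![-1/2, 0, 0] := by
  ext i
  fin_cases i <;> norm_num [midpoint_eq_smul_add, vEx, Matrix.cons_val_two,
    Matrix.cons_val_three, Matrix.vecHead, Matrix.vecTail]

lemma midpoint_vEx_two_three :
    midpoint ℝ (vEx 2) (vEx 3) = (WithLp.equiv 2 (Fin 3 → ℝ)).symm ![1/2, 0, 0] := by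
  ext i
  fin_cases i <;> norm_num [midpoint_eq_smul_add, vEx, Matrix.cons_val_two,
    Matrix.cons_val_three, Matrix.vecHead, Matrix.vecTail]

lemma neg_half_mem_convexHull :
    (WithLp.equiv 2 (Fin 3 → ℝ)).symm ![-1/2, 0, 0] ∈ convexHull ℝ (vEx '' {0, 1}) := by
  rw [← midpoint_vEx_zero_one, Set.image_pair]
  exact midpoint_mem_convexHull_pair _ _

lemma half_mem_convexHull :
    (WithLp.equiv 2 (Fin 3 → ℝ)).symm ![1/2, 0, 0] ∈ convexHull ℝ (vEx '' {2, 3}) := by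
  rw [← midpoint_vEx_two_three, Set.image_pair]
  exact midpoint_mem_convexHull_pair _ _

lemma selfConsistent_neg_half :
    SelfConsistent ((WithLp.equiv 2 (Fin 3 → ℝ)).symm ![-1/2, 0, 0]) := by
  refine selfConsistent_of_active {0, 1} (-3/2) (by simp) ?_ ?_ neg_half_mem_convexHull
  · rintro j (rfl | rfl) <;> rw [neg_HEx_add_inner_pEx] <;> norm_num
  · intro j hj
    rw [neg_HEx_add_inner_pEx]
    fin_cases j <;> simp at hj <;> norm_num

lemma selfConsistent_half :
    SelfConsistent ((WithLp.equiv 2 (Fin 3 → ℝ)).symm ![1/2, 0, 0]) := by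
  refine selfConsistent_of_active {2, 3} (-3/2) (by simp) ?_ ?_ half_mem_convexHull
  · rintro j (rfl | rfl) <;> rw [neg_HEx_add_inner_pEx] <;>
      norm_num [Matrix.cons_val_two, Matrix.cons_val_three, Matrix.vecHead, Matrix.vecTail]
  · intro j hj
    rw [neg_HEx_add_inner_pEx]
    fin_cases j <;> simp at hj <;> norm_num

lemma selfConsistent_zero :
    SelfConsistent ((WithLp.equiv 2 (Fin 3 → ℝ)).symm ![0, 0, 0]) := by
  refine selfConsistent_of_active Set.univ (-1) Set.univ_nonempty ?_ (by simp) ?_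
  · intro j _
    rw [neg_HEx_add_inner_pEx]
    fin_cases j <;> norm_num
  · have hmid : midpoint ℝ ((WithLp.equiv 2 (Fin 3 → ℝ)).symm ![-1/2, 0, 0])
        ((WithLp.equiv 2 (Fin 3 → ℝ)).symm ![1/2, 0, 0])
        = (WithLp.equiv 2 (Fin 3 → ℝ)).symm ![0, 0, 0] := by
      ext i
      fin_cases i <;> norm_num [midpoint_eq_smul_add]
    rw [← hmid]
    exact (convex_convexHull ℝ _).midpoint_mem
      (convexHull_mono (Set.image_mono (Set.subset_univ _)) neg_half_mem_convexHull)
      (convexHull_mono (Set.image_mono (Set.subset_univ _)) half_mem_convexHull)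

/-- Non-uniqueness of self-consistent velocities in dimension three: the three pairwise
distinct vectors `v' = (−1/2,0,0)`, `v'' = (1/2,0,0)` and `v''' = 0` are all
self-consistent. -/
theorem three_self_consistent_velocities :
    letI v' : EuclideanSpace ℝ (Fin 3) :=
      (WithLp.equiv 2 (Fin 3 → ℝ)).symm ![-1/2, 0, 0]
    letI v'' : EuclideanSpace ℝ (Fin 3) :=
      (WithLp.equiv 2 (Fin 3 → ℝ)).symm ![1/2, 0, 0]
    letI v''' : EuclideanSpace ℝ (Fin 3) :=
      (WithLp.equiv 2 (Fin 3 → ℝ)).symm ![0, 0, 0]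
    v' ≠ v'' ∧ v' ≠ v''' ∧ v'' ≠ v''' ∧
      SelfConsistent v' ∧ SelfConsistent v'' ∧ SelfConsistent v''' := by
  refine ⟨?_, ?_, ?_, selfConsistent_neg_half, selfConsistent_half, selfConsistent_zero⟩ <;>
  · intro h
    have h0 := congrArg (fun v : EuclideanSpace ℝ (Fin 3) => v 0) h
    norm_num at h0
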